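/- For every 0 ≤ l ≤ r ≤ n, the function t ↦ R_{lr}(x_t) on {l,...,r} (the max-regret of the subpath [x_l, x_r] as assumed dominant part with sink x_t) is unimodal with a unique minimum value. -/

import Mathlib

/-- Maximum of `f` over a finite set of indices, with the empty maximum being `0`. -/
noncomputable def maxOver (S : Finset ℕ) (f : ℕ → ℝ) : ℝ := S.fold max 0 f

/-- Left evacuation time to sink `x t` of the subpath starting at `x l`, under weights `w`. -/
noncomputable def thetaL (x : ℕ → ℝ) (τ : ℝ) (w : ℕ → ℝ) (l t : ℕ) : ℝ :=
  maxOver (Finset.Ico l t) (fun i => (x t - x i) * τ + ∑ j ∈ Finset.Icc l i, w j)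

/-- Right evacuation time to sink `x t` of the subpath ending at `x r`, under weights `w`. -/
noncomputable def thetaR (x : ℕ → ℝ) (τ : ℝ) (w : ℕ → ℝ) (t r : ℕ) : ℝ :=
  maxOver (Finset.Ioc t r) (fun i => (x i - x t) * τ + ∑ j ∈ Finset.Icc i r, w j)

/-- 1-sink evacuation time `Θ¹([x_l,x_r], x_t, w)`. -/
noncomputable def theta1 (x : ℕ → ℝ) (τ : ℝ) (w : ℕ → ℝ) (l t r : ℕ) : ℝ :=
  max (thetaL x τ w l t) (thetaR x τ w t r)

/-- A scenario assigns each vertex a weight within its bounds. -/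
def IsScenario (n : ℕ) (wlo whi : ℕ → ℝ) (s : ℕ → ℝ) : Prop :=
  ∀ i, i ≤ n → wlo i ≤ s i ∧ s i ≤ whi i

/-- A `k`-partition-with-sinks of the vertex set `{0,…,n}` into `k` consecutive
nonempty blocks `{l p, …, r p}` (`p ∈ {1,…,k}`) with a sink `t p` in each block. -/
structure KPartSinks (n k : ℕ) where
  l : ℕ → ℕ
  r : ℕ → ℕ
  t : ℕ → ℕ
  first : l 1 = 0
  last : r k = n
  consec : ∀ p, 1 ≤ p → p < k → l (p + 1) = r p + 1
  block_nonempty : ∀ p, 1 ≤ p → p ≤ k → l p ≤ r p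
  sink_lb : ∀ p, 1 ≤ p → p ≤ k → l p ≤ t p
  sink_ub : ∀ p, 1 ≤ p → p ≤ k → t p ≤ r p

/-- `k`-sink evacuation time `Θᵏ(P, {P̂,Ŷ}, w)`. -/
noncomputable def thetaK {n k : ℕ} (x : ℕ → ℝ) (τ : ℝ) (PY : KPartSinks n k) (w : ℕ → ℝ) : ℝ :=
  maxOver (Finset.Icc 1 k) (fun p => theta1 x τ w (PY.l p) (PY.t p) (PY.r p))

/-- Optimal `k`-sink evacuation time `Θᵏ_opt(P, w)`. -/
noncomputable def thetaOpt (x : ℕ → ℝ) (τ : ℝ) (n k : ℕ) (w : ℕ → ℝ) : ℝ :=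
  sInf {v : ℝ | ∃ PY : KPartSinks n k, thetaK x τ PY w = v}

/-- Regret `R({P̂,Ŷ}, w)`. -/
noncomputable def regret {n k : ℕ} (x : ℕ → ℝ) (τ : ℝ) (PY : KPartSinks n k) (w : ℕ → ℝ) : ℝ :=
  thetaK x τ PY w - thetaOpt x τ n k w

/-- Max-regret `R_max({P̂,Ŷ})`. -/
noncomputable def maxRegret {n k : ℕ} (x : ℕ → ℝ) (τ : ℝ) (wlo whi : ℕ → ℝ)
    (PY : KPartSinks n k) : ℝ :=
  sSup {v : ℝ | ∃ s : ℕ → ℝ, IsScenario n wlo whi s ∧ regret x τ PY s = v}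

/-- A worst-case scenario: a scenario attaining the max-regret. -/
def IsWorstCase {n k : ℕ} (x : ℕ → ℝ) (τ : ℝ) (wlo whi : ℕ → ℝ) (PY : KPartSinks n k)
    (s : ℕ → ℝ) : Prop :=
  IsScenario n wlo whi s ∧ regret x τ PY s = maxRegret x τ wlo whi PY

/-- `d` is the index of the dominant part of `{P̂,Ŷ}` under weights `w`:
the smallest index attaining `max_p Θ¹(P_p, y_p, w)`. -/
def IsDominant {n k : ℕ} (x : ℕ → ℝ) (τ : ℝ) (PY : KPartSinks n k) (w : ℕ → ℝ) (d : ℕ) : Prop :=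
  1 ≤ d ∧ d ≤ k ∧
  (∀ p, 1 ≤ p → p ≤ k →
    theta1 x τ w (PY.l p) (PY.t p) (PY.r p) ≤ theta1 x τ w (PY.l d) (PY.t d) (PY.r d)) ∧
  (∀ p, 1 ≤ p → p < d →
    theta1 x τ w (PY.l p) (PY.t p) (PY.r p) < theta1 x τ w (PY.l d) (PY.t d) (PY.r d))

/-- `R_{lr}(x_t)`: the max-regret of the subpath `[x_l,x_r]` as assumed dominant
part with sink `x_t`. -/
noncomputable def Rsink (x : ℕ → ℝ) (τ : ℝ) (wlo whi : ℕ → ℝ) (n k : ℕ) (l r t : ℕ) : ℝ :=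
  sSup {v : ℝ | ∃ s : ℕ → ℝ, IsScenario n wlo whi s ∧
    theta1 x τ s l t r - thetaOpt x τ n k s = v}

/-- `R_{lr}`: the minimax regret of the subpath `[x_l,x_r]` as assumed dominant part. -/
noncomputable def Rlr (x : ℕ → ℝ) (τ : ℝ) (wlo whi : ℕ → ℝ) (n k : ℕ) (l r : ℕ) : ℝ :=
  sInf {v : ℝ | ∃ t, l ≤ t ∧ t ≤ r ∧ Rsink x τ wlo whi n k l r t = v}

/-- A partition of `{0,…,i}` into `q` consecutive nonempty blocks `{l p, …, r p}`. -/
def IsQPartition (q i : ℕ) (l r : ℕ → ℕ) : Prop :=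
  l 1 = 0 ∧ r q = i ∧ (∀ p, 1 ≤ p → p < q → l (p + 1) = r p + 1) ∧
  (∀ p, 1 ≤ p → p ≤ q → l p ≤ r p)

/-- `M(q, i)`: the minimum over partitions of `{0,…,i}` into `q` consecutive
nonempty blocks of `max_p R_{l_p r_p}`. -/
noncomputable def Mreg (x : ℕ → ℝ) (τ : ℝ) (wlo whi : ℕ → ℝ) (n k : ℕ) (q i : ℕ) : ℝ :=
  sInf {v : ℝ | ∃ lf rf : ℕ → ℕ, IsQPartition q i lf rf ∧
    maxOver (Finset.Icc 1 q) (fun p => Rlr x τ wlo whi n k (lf p) (rf p)) = v}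

/-- Left-dominant scenario on `{l,…,r}`. -/
def LeftDominant (wlo whi s : ℕ → ℝ) (l r : ℕ) : Prop :=
  ∃ i, l ≤ i ∧ i ≤ r + 1 ∧ (∀ j, l ≤ j → j < i → s j = whi j) ∧
    (∀ j, i ≤ j → j ≤ r → s j = wlo j)

/-- Right-dominant scenario on `{l,…,r}`. -/
def RightDominant (wlo whi s : ℕ → ℝ) (l r : ℕ) : Prop :=
  ∃ i, l ≤ i ∧ i ≤ r + 1 ∧ (∀ j, l ≤ j → j < i → s j = wlo j) ∧
    (∀ j, i ≤ j → j ≤ r → s j = whi j)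

/-!
For a fixed scenario, moving the sink to the right can only lengthen the left evacuation time
and shorten the right one, so `t ↦ Θ¹([x_l,x_r], x_t, s)` is the maximum of a nondecreasing and a
nonincreasing function, hence `Θ¹(t) ≤ max (Θ¹(t₁), Θ¹(t₂))` for `t₁ ≤ t ≤ t₂`. This property
survives subtracting `Θᵏ_opt(s)`, which does not depend on `t`, and taking the supremum over
scenarios. A function on `{l,…,r}` with this property decreases up to any of its minimisers and
increases after it.
-/

open Set

section maxOver

variable {S T : Finset ℕ} {f g : ℕ → ℝ}

lemma maxOver_nonneg (S : Finset ℕ) (f : ℕ → ℝ) : 0 ≤ maxOver S f :=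
  (Finset.le_fold_max _).mpr (Or.inl le_rfl)

lemma le_maxOver {i : ℕ} (hi : i ∈ S) : f i ≤ maxOver S f :=
  (Finset.le_fold_max _).mpr (Or.inr ⟨i, hi, le_rfl⟩)

lemma maxOver_mono (hST : S ⊆ T) (h : ∀ i ∈ S, f i ≤ g i) : maxOver S f ≤ maxOver T g :=
  (Finset.fold_max_le _).mpr
    ⟨maxOver_nonneg T g, fun i hi => (h i hi).trans (le_maxOver (hST hi))⟩

end maxOver

section evacuationTime

variable {x : ℕ → ℝ} {τ : ℝ} {w : ℕ → ℝ} {l t t' r : ℕ}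

lemma thetaL_mono_sink (hτ : 0 ≤ τ) (ht : t ≤ t') (hx : x t ≤ x t') :
    thetaL x τ w l t ≤ thetaL x τ w l t' :=
  maxOver_mono (Finset.Ico_subset_Ico le_rfl ht) fun i _ => by
    have := mul_le_mul_of_nonneg_right (sub_le_sub_right hx (x i)) hτ
    linarith

lemma thetaR_anti_sink (hτ : 0 ≤ τ) (ht : t ≤ t') (hx : x t ≤ x t') :
    thetaR x τ w t' r ≤ thetaR x τ w t r :=
  maxOver_mono (Finset.Ioc_subset_Ioc ht le_rfl) fun i _ => by
    have := mul_le_mul_of_nonneg_right (sub_le_sub_left hx (x i)) hτ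
    linarith

lemma theta1_le_max_theta1 {t₁ t₂ : ℕ} (hτ : 0 ≤ τ) (h₁ : t₁ ≤ t) (h₂ : t ≤ t₂)
    (hx₁ : x t₁ ≤ x t) (hx₂ : x t ≤ x t₂) :
    theta1 x τ w l t r ≤ max (theta1 x τ w l t₁ r) (theta1 x τ w l t₂ r) :=
  max_le ((thetaL_mono_sink hτ h₂ hx₂).trans ((le_max_left _ _).trans (le_max_right _ _)))
    ((thetaR_anti_sink hτ h₁ hx₁).trans ((le_max_right _ _).trans (le_max_left _ _)))

lemma theta1_mono_weights {w' : ℕ → ℝ} (hw : ∀ j, j ≤ r → w j ≤ w' j) (ht : t ≤ r) :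
    theta1 x τ w l t r ≤ theta1 x τ w' l t r := by
  have hsum : ∀ i i', i' ≤ r →
      ∑ j ∈ Finset.Icc i i', w j ≤ ∑ j ∈ Finset.Icc i i', w' j := fun i i' hi' =>
    Finset.sum_le_sum fun j hj => hw j ((Finset.mem_Icc.mp hj).2.trans hi')
  refine max_le_max (maxOver_mono subset_rfl fun i hi => ?_)
    (maxOver_mono subset_rfl fun i _ => add_le_add_right (hsum i r le_rfl) _)
  rw [Finset.mem_Ico] at hi
  exact add_le_add_right (hsum l i (by omega)) _

end evacuationTime

lemma thetaOpt_nonneg (x : ℕ → ℝ) (τ : ℝ) (n k : ℕ) (w : ℕ → ℝ) : 0 ≤ thetaOpt x τ n k w :=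
  Real.sInf_nonneg (by rintro _ ⟨PY, rfl⟩; exact maxOver_nonneg _ _)

lemma csSup_image_le_max_csSup_image {α β : Type*} [ConditionallyCompleteLinearOrder β]
    {S : Set α} {f g h : α → β} (hS : S.Nonempty) (hg : BddAbove (g '' S))
    (hh : BddAbove (h '' S)) (hf : ∀ s ∈ S, f s ≤ max (g s) (h s)) :
    sSup (f '' S) ≤ max (sSup (g '' S)) (sSup (h '' S)) :=
  csSup_le (hS.image f) <| by
    rintro _ ⟨s, hs, rfl⟩
    exact (hf s hs).trans (max_le_max (le_csSup hg ⟨s, hs, rfl⟩) (le_csSup hh ⟨s, hs, rfl⟩))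

section Rsink

variable {n k : ℕ} {x : ℕ → ℝ} {τ : ℝ} {wlo whi : ℕ → ℝ} {l r : ℕ}

lemma bddAbove_regret_image {t : ℕ} (ht : t ≤ r) (hrn : r ≤ n) :
    BddAbove ((fun s => theta1 x τ s l t r - thetaOpt x τ n k s) ''
      {s | IsScenario n wlo whi s}) := by
  refine ⟨theta1 x τ whi l t r, ?_⟩
  rintro _ ⟨s, hs, rfl⟩
  have hle : theta1 x τ s l t r ≤ theta1 x τ whi l t r :=
    theta1_mono_weights (fun j hj => (hs j (hj.trans hrn)).2) ht
  linarith [thetaOpt_nonneg x τ n k s]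

lemma Rsink_le_max {t₁ t t₂ : ℕ} (hx : MonotoneOn x (Iic n)) (hτ : 0 ≤ τ)
    (hw : ∀ i, i ≤ n → wlo i ≤ whi i) (h₁ : t₁ ≤ t) (h₂ : t ≤ t₂) (ht₂ : t₂ ≤ r) (hrn : r ≤ n) :
    Rsink x τ wlo whi n k l r t ≤
      max (Rsink x τ wlo whi n k l r t₁) (Rsink x τ wlo whi n k l r t₂) := by
  have mem : ∀ {i}, i ≤ t₂ → i ∈ Iic n := fun hi => mem_Iic.mpr (by omega)
  refine csSup_image_le_max_csSup_image ⟨wlo, fun i hi => ⟨le_rfl, hw i hi⟩⟩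
    (bddAbove_regret_image (by omega) hrn) (bddAbove_regret_image ht₂ hrn) fun s _ => ?_
  rw [max_sub_sub_right]
  exact sub_le_sub_right (theta1_le_max_theta1 hτ h₁ h₂ (hx (mem (by omega)) (mem h₂) h₁)
    (hx (mem h₂) (mem le_rfl) h₂)) _

end Rsink

lemma exists_antitoneOn_monotoneOn_of_le_max {α : Type*} [LinearOrder α] {f : ℕ → α} {l r : ℕ}
    (hlr : l ≤ r)
    (hf : ∀ t₁ t t₂, l ≤ t₁ → t₁ ≤ t → t ≤ t₂ → t₂ ≤ r → f t ≤ max (f t₁) (f t₂)) :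
    ∃ m, l ≤ m ∧ m ≤ r ∧ AntitoneOn f (Icc l m) ∧ MonotoneOn f (Icc m r) := by
  obtain ⟨m, hm, hmin⟩ := Finset.exists_min_image (Finset.Icc l r) f
    ⟨l, Finset.mem_Icc.mpr ⟨le_rfl, hlr⟩⟩
  rw [Finset.mem_Icc] at hm
  refine ⟨m, hm.1, hm.2, fun a ha a' ha' haa' => ?_, fun a ha a' ha' haa' => ?_⟩
  · have hma : f m ≤ f a := hmin a (Finset.mem_Icc.mpr ⟨ha.1, ha.2.trans hm.2⟩)
    exact (hf a a' m ha.1 haa' ha'.2 hm.2).trans (max_le le_rfl hma)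
  · have hma' : f m ≤ f a' := hmin a' (Finset.mem_Icc.mpr ⟨hm.1.trans ha'.1, ha'.2⟩)
    exact (hf m a a' hm.1 ha.1 haa' ha'.2).trans (max_le hma' le_rfl)

theorem stmt_17_general (n k : ℕ) (x : ℕ → ℝ) (τ : ℝ) (wlo whi : ℕ → ℝ)
    (hx : ∀ i, i < n → x i < x (i + 1)) (hτ : 0 < τ)
    (hw : ∀ i, i ≤ n → 0 < wlo i ∧ wlo i ≤ whi i)
    (l r : ℕ) (hlr : l ≤ r) (hrn : r ≤ n) :
    ∃ m, l ≤ m ∧ m ≤ r ∧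
      (∀ a a', l ≤ a → a ≤ a' → a' ≤ m →
        Rsink x τ wlo whi n k l r a' ≤ Rsink x τ wlo whi n k l r a) ∧
      (∀ a a', m ≤ a → a ≤ a' → a' ≤ r →
        Rsink x τ wlo whi n k l r a ≤ Rsink x τ wlo whi n k l r a') := by
  have hxmono : MonotoneOn x (Iic n) := (strictMonoOn_Iic_of_lt_succ hx).monotoneOn
  obtain ⟨m, hlm, hmr, hanti, hmono⟩ := exists_antitoneOn_monotoneOn_of_le_max hlr
    fun t₁ t t₂ _ h₁ h₂ ht₂ => Rsink_le_max (k := k) hxmono hτ.le (fun i hi => (hw i hi).2)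
      h₁ h₂ ht₂ hrn
  exact ⟨m, hlm, hmr,
    fun a a' hla haa' ham => hanti ⟨hla, haa'.trans ham⟩ ⟨hla.trans haa', ham⟩ haa',
    fun a a' hma haa' har => hmono ⟨hma, haa'.trans har⟩ ⟨hma.trans haa', har⟩ haa'⟩

/-- the max-regret `t ↦ R_{lr}(x_t)` of a subpath as assumed
dominant part is unimodal with a unique minimum value on `{l, …, r}`. -/
theorem stmt_17 (n k : ℕ) (x : ℕ → ℝ) (τ : ℝ) (wlo whi : ℕ → ℝ)
    (hx : ∀ i, i < n → x i < x (i + 1)) (hτ : 0 < τ)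
    (hw : ∀ i, i ≤ n → 0 < wlo i ∧ wlo i ≤ whi i) (hk : 1 ≤ k)
    (l r : ℕ) (hlr : l ≤ r) (hrn : r ≤ n) :
    ∃ m, l ≤ m ∧ m ≤ r ∧
      (∀ a a', l ≤ a → a ≤ a' → a' ≤ m →
        Rsink x τ wlo whi n k l r a' ≤ Rsink x τ wlo whi n k l r a) ∧
      (∀ a a', m ≤ a → a ≤ a' → a' ≤ r →
        Rsink x τ wlo whi n k l r a ≤ Rsink x τ wlo whi n k l r a') :=
  stmt_17_general n k x τ wlo whi hx hτ hw l r hlr hrn
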